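/- Let (x^k), (y^k) be a DCA sequence for minimizing f = g − h over C with x^0 ∈ C. Suppose g is ρ_g-strongly convex on C and h is ρ_h-strongly convex on C with ρ_g + ρ_h > 0, and suppose f is bounded below on C. Then the square summable property holds: ∑_{k≥0} ‖x^{k+1} − x^k‖² < ∞; in particular ‖x^{k+1} − x^k‖ → 0 as k → ∞. -/

import Mathlib

/-!
A strongly convex function exceeds its value at a minimiser `x` over `C` by at least
`ρ/4 · ‖z - x‖²` (evaluate it at the midpoint of `x` and `z`). Both DCA half-steps minimise
some `φ - ⟪y, ·⟫`: `x^k` minimises `h - ⟪y^k, ·⟫` because `y^k` is a subgradient, and `x^{k+1}`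
minimises `g - ⟪y^k, ·⟫` over `C`. Adding the two inequalities gives the descent
`f(x^{k+1}) + (ρ_g + ρ_h)/4 · ‖x^{k+1} - x^k‖² ≤ f(x^k)`, which telescopes against the lower
bound of `f`.
-/

open scoped RealInnerProductSpace
open Filter Topology

section StrongConvexity

variable {E : Type*} [NormedAddCommGroup E]

lemma StrongConvexOn.add_sq_le_of_isMinOn [NormedSpace ℝ E] {s : Set E} {m : ℝ} {f : E → ℝ}
    {a z : E} (hf : StrongConvexOn s m f) (hmin : IsMinOn f s a) (ha : a ∈ s) (hz : z ∈ s) :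
    f a + m / 4 * ‖z - a‖ ^ 2 ≤ f z := by
  have hhalf : (0 : ℝ) ≤ 1 / 2 := by norm_num
  have hmid := hf.2 ha hz hhalf hhalf (by norm_num)
  have hle : f a ≤ f ((1 / 2 : ℝ) • a + (1 / 2 : ℝ) • z) :=
    hmin (hf.1 ha hz hhalf hhalf (by norm_num))
  rw [norm_sub_rev] at hmid
  simp only [smul_eq_mul] at hmid
  linarith

variable [InnerProductSpace ℝ E]

lemma StrongConvexOn.sub_inner {s : Set E} {m : ℝ} {f : E → ℝ}
    (hf : StrongConvexOn s m f) (y : E) : StrongConvexOn s m fun x ↦ f x - ⟪y, x⟫ := by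
  have h := hf.sub ((innerₛₗ ℝ y).concaveOn hf.1).uniformConcaveOn_zero
  rwa [add_zero] at h

lemma dca_descent {C : Set E} {g h : E → ℝ} {ρg ρh : ℝ} {x x' y : E}
    (hg : StrongConvexOn C ρg g) (hh : StrongConvexOn C ρh h)
    (hsub : ∀ z, h z ≥ h x + ⟪y, z - x⟫) (hmin : ∀ z ∈ C, g x' - ⟪y, x'⟫ ≤ g z - ⟪y, z⟫)
    (hx : x ∈ C) (hx' : x' ∈ C) :
    g x' - h x' + (ρg + ρh) / 4 * ‖x' - x‖ ^ 2 ≤ g x - h x := by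
  have hg_step := (hg.sub_inner y).add_sq_le_of_isMinOn (isMinOn_iff.2 hmin) hx' hx
  have hh_min : IsMinOn (fun z ↦ h z - ⟪y, z⟫) C x := isMinOn_iff.2 fun z _ ↦ by
    have := hsub z
    rw [inner_sub_right] at this
    linarith
  have hh_step := (hh.sub_inner y).add_sq_le_of_isMinOn hh_min hx hx'
  rw [norm_sub_rev] at hg_step
  linarith

end StrongConvexity

lemma summable_of_add_mul_le {u d : ℕ → ℝ} {c : ℝ} (hc : 0 < c) (hd : ∀ k, 0 ≤ d k)
    (hu : BddBelow (Set.range u)) (hdesc : ∀ k, u (k + 1) + c * d k ≤ u k) : Summable d := by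
  obtain ⟨B, hB⟩ := hu
  have htelescope : ∀ n, c * ∑ k ∈ Finset.range n, d k ≤ u 0 - u n := by
    intro n
    induction n with
    | zero => simp
    | succ n ih =>
      rw [Finset.sum_range_succ, mul_add]
      linarith [hdesc n]
  refine summable_of_sum_range_le (c := (u 0 - B) / c) hd fun n ↦ (le_div_iff₀' hc).2 ?_
  linarith [htelescope n, hB ⟨n, rfl⟩]

theorem stmt_2_general
    {E : Type*} [NormedAddCommGroup E] [InnerProductSpace ℝ E]
    (C : Set E)
    (g h : E → ℝ)
    (f : E → ℝ) (hf : ∀ z, f z = g z - h z)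
    (ρg ρh : ℝ) (hρ : 0 < ρg + ρh)
    (hsg : ConvexOn ℝ C (fun z => g z - ρg / 2 * ‖z‖ ^ 2))
    (hsh : ConvexOn ℝ C (fun z => h z - ρh / 2 * ‖z‖ ^ 2))
    (hbelow : BddBelow (f '' C))
    (x y : ℕ → E)
    (hx0 : x 0 ∈ C)
    (hsub : ∀ k, ∀ z, h z ≥ h (x k) + ⟪y k, z - x k⟫)
    (hxC : ∀ k, x (k + 1) ∈ C)
    (hmin : ∀ k, ∀ z ∈ C, g (x (k + 1)) - ⟪y k, x (k + 1)⟫ ≤ g z - ⟪y k, z⟫) :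
    Summable (fun k => ‖x (k + 1) - x k‖ ^ 2) ∧
      Tendsto (fun k => ‖x (k + 1) - x k‖) atTop (𝓝 0) := by
  have hx : ∀ k, x k ∈ C := by
    rintro (_ | k)
    exacts [hx0, hxC k]
  have hdesc : ∀ k, f (x (k + 1)) + (ρg + ρh) / 4 * ‖x (k + 1) - x k‖ ^ 2 ≤ f (x k) := fun k ↦ by
    simpa only [hf] using dca_descent (strongConvexOn_iff_convex.2 hsg)
      (strongConvexOn_iff_convex.2 hsh) (hsub k) (hmin k) (hx k) (hxC k)
  have hbdd : BddBelow (Set.range fun k ↦ f (x k)) :=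
    hbelow.mono (Set.range_subset_iff.2 fun k ↦ Set.mem_image_of_mem f (hx k))
  have hS := summable_of_add_mul_le (by linarith) (fun k ↦ by positivity) hbdd hdesc
  exact ⟨hS, by simpa using hS.tendsto_atTop_zero.sqrt⟩

/-- square summable property of DCA under strong convexity and
lower boundedness of `f` over `C`. -/
theorem stmt_2
    {E : Type*} [NormedAddCommGroup E] [InnerProductSpace ℝ E] [FiniteDimensional ℝ E]
    (C : Set E) (hCne : C.Nonempty) (hCclosed : IsClosed C) (hCconv : Convex ℝ C)
    (g h : E → ℝ) (hg : ConvexOn ℝ Set.univ g) (hh : ConvexOn ℝ Set.univ h)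
    (f : E → ℝ) (hf : ∀ z, f z = g z - h z)
    (ρg ρh : ℝ) (hρg0 : 0 ≤ ρg) (hρh0 : 0 ≤ ρh) (hρ : 0 < ρg + ρh)
    (hsg : ConvexOn ℝ C (fun z => g z - ρg / 2 * ‖z‖ ^ 2))
    (hsh : ConvexOn ℝ C (fun z => h z - ρh / 2 * ‖z‖ ^ 2))
    (hbelow : BddBelow (f '' C))
    (x y : ℕ → E)
    (hx0 : x 0 ∈ C)
    (hsub : ∀ k, ∀ z, h z ≥ h (x k) + ⟪y k, z - x k⟫)
    (hxC : ∀ k, x (k + 1) ∈ C)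
    (hmin : ∀ k, ∀ z ∈ C, g (x (k + 1)) - ⟪y k, x (k + 1)⟫ ≤ g z - ⟪y k, z⟫) :
    Summable (fun k => ‖x (k + 1) - x k‖ ^ 2) ∧
      Tendsto (fun k => ‖x (k + 1) - x k‖) atTop (𝓝 0) :=
  stmt_2_general C g h f hf ρg ρh hρ hsg hsh hbelow x y hx0 hsub hxC hmin
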